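/- Let M be an R_d-module and let H = H_v be a half-space in ℝ^d. Then M is R_H-Noetherian if and only if M is finitely generated as an R_H-module. -/

import Mathlib

open scoped RealInnerProductSpace

noncomputable section

/-- Euclidean space `ℝ^d`. -/
abbrev Rspace (d : ℕ) : Type := EuclideanSpace ℝ (Fin d)

/-- The natural embedding `ℤ^d → ℝ^d`. -/
def intVec {d : ℕ} (n : Fin d → ℤ) : Rspace d := WithLp.toLp 2 (fun i => (n i : ℝ))

/-- The ring `R_d = ℤ[u₁^{±1}, …, u_d^{±1}]` of Laurent polynomials with integer
coefficients, realized as the group algebra of `ℤ^d` over `ℤ`. -/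
abbrev LaurentRing (d : ℕ) : Type := AddMonoidAlgebra ℤ (Fin d → ℤ)

/-- The monomial `u^n` in `R_d`. -/
def mono {d : ℕ} (n : Fin d → ℤ) : LaurentRing d := AddMonoidAlgebra.single n 1

/-- The subring `R_H = ℤ[u^n : n·v ≤ 0]` of `R_d` attached to the half-space
`H_v = {x : x·v ≤ 0}`. -/
def RH {d : ℕ} (v : Rspace d) : Subring (LaurentRing d) :=
  Subring.closure {f : LaurentRing d | ∃ n : Fin d → ℤ, ⟪intVec n, v⟫ ≤ 0 ∧ f = mono n}

/-- An `R_d`-module `M` is Noetherian over a subring `S ⊆ R_d` if it satisfies the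
ascending chain condition for `S`-submodules (equivalently, all `S`-submodules are
finitely generated). -/
def NoetherianOver {d : ℕ} (S : Subring (LaurentRing d)) (M : Type*) [AddCommGroup M]
    [Module (LaurentRing d) M] : Prop :=
  letI : Module S M := Module.compHom M S.subtype
  IsNoetherian S M

/-- `M` is finitely generated as a module over the subring `S ⊆ R_d`. -/
def FinitelyGeneratedOver {d : ℕ} (S : Subring (LaurentRing d)) (M : Type*)
    [AddCommGroup M] [Module (LaurentRing d) M] : Prop :=
  letI : Module S M := Module.compHom M S.subtype
  Module.Finite S M

section Aux

variable {d : ℕ} (v : Rspace d)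

theorem intVec_add (a b : Fin d → ℤ) : intVec (d := d) (a + b) = intVec a + intVec b := by
  ext i
  simp [intVec]

theorem intVec_zero : intVec (d := d) 0 = 0 := by
  ext i; simp [intVec]

theorem inner_intVec_add (a b : Fin d → ℤ) :
    ⟪intVec (a + b), v⟫ = ⟪intVec a, v⟫ + ⟪intVec b, v⟫ := by
  rw [intVec_add, inner_add_left]

theorem mono_mul_mono (a b : Fin d → ℤ) : (mono a : LaurentRing d) * mono b = mono (a + b) := by
  simp [mono, AddMonoidAlgebra.single_mul_single]

theorem mono_zero : (mono 0 : LaurentRing d) = 1 := rfl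

theorem mono_mem_RH {n : Fin d → ℤ} (h : ⟪intVec n, v⟫ ≤ 0) : mono n ∈ RH v :=
  Subring.subset_closure ⟨n, h, rfl⟩

/-- membership criterion: all monomials nonpositive. -/
theorem mem_RH_of_support (f : LaurentRing d)
    (h : ∀ n ∈ f.coeff.support, ⟪intVec n, v⟫ ≤ 0) : f ∈ RH v := by
  induction f using AddMonoidAlgebra.induction with
  | zero => exact zero_mem _
  | single_add a b f ha hb ih =>
    have hdisj : Disjoint (Finsupp.single a b).support f.coeff.support := by
      rw [Finsupp.support_single_ne_zero a hb]; simpa using ha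
    have hsupp : (AddMonoidAlgebra.single a b + f).coeff.support = insert a f.coeff.support := by
      rw [AddMonoidAlgebra.coeff_add, AddMonoidAlgebra.coeff_single, Finsupp.support_add_eq hdisj, Finsupp.support_single_ne_zero a hb,
        Finset.insert_eq]
    have ha' : ⟪intVec a, v⟫ ≤ 0 := by
      apply h; rw [hsupp]; exact Finset.mem_insert_self _ _
    have hf' : f ∈ RH v := by
      apply ih; intro n hn; apply h; rw [hsupp]; exact Finset.mem_insert_of_mem hn
    have hsingle : (AddMonoidAlgebra.single a b : LaurentRing d) ∈ RH v := by
      have : (AddMonoidAlgebra.single a b : LaurentRing d) = b • mono a := by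
        simp [mono, AddMonoidAlgebra.smul_single]
      rw [this]
      exact zsmul_mem (mono_mem_RH v ha') b
    exact add_mem hsingle hf'

/-- all monomials of an element of `RH v` are nonpositive. -/
theorem support_of_mem_RH {f : LaurentRing d} (h : f ∈ RH v) :
    ∀ n ∈ f.coeff.support, ⟪intVec n, v⟫ ≤ 0 := by
  induction h using Subring.closure_induction with
  | mem x hx =>
    obtain ⟨n, hn, rfl⟩ := hx
    intro m hm
    have : m = n := by
      have := Finsupp.support_single_subset hm
      simpa using this
    rwa [this]
  | zero => simp
  | one =>
    intro n hn
    have : n = 0 := by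
      simpa [AddMonoidAlgebra.one_def] using hn
    rw [this, intVec_zero, inner_zero_left]
  | add x y hx hy ihx ihy =>
    intro n hn
    rw [AddMonoidAlgebra.coeff_add] at hn
    rcases Finset.mem_union.mp (Finsupp.support_add hn) with h' | h'
    · exact ihx n h'
    · exact ihy n h'
  | neg x hx ihx =>
    intro n hn
    exact ihx n (by rwa [AddMonoidAlgebra.coeff_neg, Finsupp.support_neg] at hn)
  | mul x y hx hy ihx ihy =>
    intro n hn
    classical
    rcases Finset.mem_add.mp (AddMonoidAlgebra.support_coeff_mul_subset x y hn) with ⟨a, ha, b, hb, rfl⟩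
    have := add_nonpos (ihx a ha) (ihy b hb)
    rwa [← inner_intVec_add] at this
end Aux

theorem inner_intVec_single {d : ℕ} (v : Rspace d) (i : Fin d) (c : ℤ) :
    ⟪intVec (Pi.single i c), v⟫ = (c : ℝ) * v i := by
  classical
  rw [PiLp.inner_apply]
  have hterm : ∀ j, intVec (Pi.single i c) j * v j
      = if j = i then (c : ℝ) * v i else 0 := by
    intro j
    by_cases hj : j = i
    · subst hj; simp [intVec, Pi.single_apply]
    · simp [intVec, Pi.single_apply, hj]
  simp only [Real.inner_apply, conj_trivial, hterm]
  simp

theorem intVec_neg {d : ℕ} (a : Fin d → ℤ) : intVec (d := d) (-a) = -intVec a := by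
  ext i; simp [intVec]

theorem lr_noetherianRing (d : ℕ) : IsNoetherianRing (LaurentRing d) := by
  have h1 : AddGroup.FG (Fin d → ℤ) := Module.Finite.iff_addGroup_fg.mp inferInstance
  have : AddMonoid.FG (Fin d → ℤ) := AddGroup.fg_iff_addMonoid_fg.mp h1
  have := AddMonoidAlgebra.finiteType_of_fg (R := ℤ) (M := (Fin d → ℤ))
  exact Algebra.FiniteType.isNoetherianRing ℤ _



/-- Let `M` be an `R_d`-module and `H = H_v` a half-space in `ℝ^d`.
Then `M` is `R_H`-Noetherian if and only if `M` is finitely generated as an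
`R_H`-module. -/
theorem noetherianOver_iff_finitelyGeneratedOver {d : ℕ} (M : Type*) [AddCommGroup M]
    [Module (LaurentRing d) M] (v : Rspace d) (hv : ‖v‖ = 1) :
    NoetherianOver (RH v) M ↔ FinitelyGeneratedOver (RH v) M := by
  classical
  letI : Module (RH v) M := Module.compHom M (RH v).subtype
  show IsNoetherian (RH v) M ↔ Module.Finite (RH v) M
  have key_smul : ∀ (s : (RH v)) (x : M), s • x = (s : LaurentRing d) • x := fun _ _ => rfl
  constructor
  · intro h
    exact ⟨h.noetherian ⊤⟩
  · intro hfin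
    -- choose ξ with positive inner product
    have hvne : v ≠ 0 := fun h => by simp [h] at hv
    obtain ⟨ξ, hξ⟩ : ∃ ξ : Fin d → ℤ, 0 < ⟪intVec ξ, v⟫ := by
      by_contra hcon
      push_neg at hcon
      apply hvne
      ext i
      have h1 := hcon (Pi.single i 1)
      have h2 := hcon (Pi.single i (-1))
      rw [inner_intVec_single] at h1 h2
      push_cast at h1 h2
      show v i = 0
      linarith
    -- the ideal of strictly negative elements
    let I : Ideal (RH v) := Ideal.span
      {s : (RH v) | ∃ n : Fin d → ℤ, ⟪intVec n, v⟫ < 0 ∧ (s : LaurentRing d) = mono n}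
    have hI : ∀ s ∈ I, ∀ n ∈ (s : LaurentRing d).coeff.support, ⟪intVec n, v⟫ < 0 := by
      intro s hs
      induction hs using Submodule.span_induction with
      | mem x hx =>
        obtain ⟨n, hn, hx⟩ := hx
        intro m hm
        rw [hx] at hm
        have : m = n := by simpa using Finsupp.support_single_subset hm
        rwa [this]
      | zero => intro m hm; simp at hm
      | add x y hx hy ihx ihy =>
        intro m hm
        have hm' : m ∈ ((x : LaurentRing d) + (y : LaurentRing d)).coeff.support := by
          simpa using hm
        rw [AddMonoidAlgebra.coeff_add] at hm'
        rcases Finset.mem_union.mp (Finsupp.support_add hm') with h' | h'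
        · exact ihx m h'
        · exact ihy m h'
      | smul a x hx ihx =>
        intro m hm
        have hm' : m ∈ ((a : LaurentRing d) * (x : LaurentRing d)).coeff.support := by
          simpa [smul_eq_mul] using hm
        rcases Finset.mem_add.mp (AddMonoidAlgebra.support_coeff_mul_subset _ _ hm') with ⟨p, hp, q, hq, rfl⟩
        have h1 := support_of_mem_RH v a.2 p hp
        have h2 := ihx q hq
        rw [inner_intVec_add]
        linarith
    -- top ≤ I • top
    have hneg : ⟪intVec (-ξ), v⟫ < 0 := by
      rw [intVec_neg, inner_neg_left]; linarith
    have hle : (⊤ : Submodule (RH v) M) ≤ I • ⊤ := by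
      intro x _
      have hsI : (⟨mono (-ξ), mono_mem_RH v hneg.le⟩ : (RH v)) ∈ I :=
        Ideal.subset_span ⟨-ξ, hneg, rfl⟩
      have hx : x = (⟨mono (-ξ), mono_mem_RH v hneg.le⟩ : (RH v)) • ((mono ξ : LaurentRing d) • x) := by
        rw [key_smul, ← mul_smul, mono_mul_mono, neg_add_cancel, mono_zero, one_smul]
      rw [hx]
      exact Submodule.smul_mem_smul hsI Submodule.mem_top
    -- Nakayama
    obtain ⟨r, hr1, hr0⟩ :=
      Submodule.exists_sub_one_mem_and_smul_eq_zero_of_fg_of_le_smul I ⊤ hfin.fg_top hle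
    set h : (RH v) := 1 - r with hh
    have hhI : h ∈ I := by
      have := I.neg_mem hr1
      rwa [neg_sub] at this
    have hfix : ∀ x : M, h • x = x := by
      intro x
      have h0 : r • x = 0 := hr0 x Submodule.mem_top
      rw [hh, sub_smul, one_smul, h0, sub_zero]
    have hfixpow : ∀ (k : ℕ) (x : M), (h ^ k) • x = x := by
      intro k
      induction k with
      | zero => intro x; rw [pow_zero, one_smul]
      | succ k ih => intro x; rw [pow_succ, mul_smul, hfix, ih]
    have hhsupp := hI h hhI
    -- for each monomial, a power of h pushes it into RH v
    have hD : ∀ m : Fin d → ℤ, ∃ k : ℕ, mono m * (h : LaurentRing d) ^ k ∈ RH v := by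
      intro m
      by_cases h0 : (h : LaurentRing d) = 0
      · exact ⟨1, by rw [h0, pow_one, mul_zero]; exact zero_mem _⟩
      · have hne : (h : LaurentRing d).coeff.support.Nonempty := Finsupp.support_nonempty_iff.mpr (mt AddMonoidAlgebra.coeff_eq_zero.mp h0)
        set c₀ : ℝ := (h : LaurentRing d).coeff.support.inf' hne (fun n => -⟪intVec n, v⟫) with hc₀
        have hc₀pos : 0 < c₀ := by
          rw [hc₀, Finset.lt_inf'_iff]
          intro b hb
          have := hhsupp b hb
          linarith
        have hpow : ∀ k : ℕ, ∀ n ∈ ((h : LaurentRing d) ^ k).coeff.support,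
            ⟪intVec n, v⟫ ≤ -(k : ℝ) * c₀ := by
          intro k
          induction k with
          | zero =>
            intro n hn
            rw [pow_zero] at hn
            have hn' : n ∈ (AddMonoidAlgebra.single (0 : Fin d → ℤ) (1 : ℤ)).coeff.support := by
              simpa [AddMonoidAlgebra.one_def] using hn
            have : n = 0 := by simpa using Finsupp.support_single_subset hn'
            rw [this, intVec_zero, inner_zero_left]
            simp
          | succ k ih =>
            intro n hn
            rw [pow_succ] at hn
            rcases Finset.mem_add.mp (AddMonoidAlgebra.support_coeff_mul_subset _ _ hn) with ⟨a, ha, b, hb, rfl⟩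
            have h1 := ih a ha
            have h2 : ⟪intVec b, v⟫ ≤ -c₀ := by
              have := Finset.inf'_le (fun n => -⟪intVec n, v⟫) hb
              rw [← hc₀] at this
              linarith
            rw [inner_intVec_add]
            push_cast
            linarith
        obtain ⟨k, hk⟩ := exists_nat_ge (⟪intVec m, v⟫ / c₀)
        refine ⟨k, mem_RH_of_support v _ ?_⟩
        intro n hn
        rcases Finset.mem_add.mp (AddMonoidAlgebra.support_coeff_mul_subset _ _ hn) with ⟨a, ha, b, hb, rfl⟩
        have ham : a = m := by simpa [mono] using Finsupp.support_single_subset ha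
        have h2 := hpow k b hb
        have h3 : ⟪intVec m, v⟫ ≤ (k : ℝ) * c₀ := by rwa [div_le_iff₀ hc₀pos] at hk
        rw [inner_intVec_add, ham]
        linarith
    have hcoepow : ∀ k : ℕ, ((h ^ k : (RH v)) : LaurentRing d) = (h : LaurentRing d) ^ k :=
      fun k => SubmonoidClass.coe_pow h k
    -- every RH-submodule is an R_d-submodule
    have hE : ∀ (N : Submodule (RH v) M) (ρ : LaurentRing d) (x : M), x ∈ N → ρ • x ∈ N := by
      intro N ρ x hx
      induction ρ using AddMonoidAlgebra.induction_on with
      | of g =>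
        obtain ⟨k, hk⟩ := hD g
        have heq : (AddMonoidAlgebra.of ℤ (Fin d → ℤ) (Multiplicative.ofAdd g)) • x
            = (⟨mono g * (h : LaurentRing d) ^ k, hk⟩ : (RH v)) • x := by
          rw [key_smul]
          show (mono g : LaurentRing d) • x = (mono g * (h : LaurentRing d) ^ k) • x
          conv_lhs => rw [← hfixpow k x, key_smul, hcoepow]
          rw [← mul_smul]
        rw [heq]
        exact N.smul_mem _ hx
      | add f g ihf ihg =>
        rw [add_smul]
        exact N.add_mem ihf ihg
      | smul b f ihf =>
        rw [smul_assoc]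
        exact zsmul_mem ihf b
    -- M is Noetherian over R_d
    haveI := lr_noetherianRing d
    haveI : Module.Finite (LaurentRing d) M := by
      obtain ⟨T0, hT0⟩ := hfin.fg_top
      refine ⟨⟨T0, ?_⟩⟩
      rw [eq_top_iff]
      intro x _
      have hx : x ∈ Submodule.span (RH v) (T0 : Set M) := hT0 ▸ Submodule.mem_top
      let P : Submodule (RH v) M :=
        { carrier := (Submodule.span (LaurentRing d) (T0 : Set M) : Set M)
          add_mem' := fun ha hb => Submodule.add_mem _ ha hb
          zero_mem' := Submodule.zero_mem _
          smul_mem' := fun s y hy => by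
            show (s : LaurentRing d) • y ∈ (Submodule.span (LaurentRing d) (T0 : Set M) : Set M)
            exact Submodule.smul_mem _ _ hy }
      have hP : Submodule.span (RH v) (T0 : Set M) ≤ P :=
        Submodule.span_le.mpr Submodule.subset_span
      exact hP hx
    haveI : IsNoetherian (LaurentRing d) M := isNoetherian_of_isNoetherianRing_of_finite _ _
    refine isNoetherian_def.mpr fun N => ?_
    let N' : Submodule (LaurentRing d) M :=
      { carrier := (N : Set M)
        add_mem' := fun ha hb => N.add_mem ha hb
        zero_mem' := N.zero_mem
        smul_mem' := fun ρ x hx => hE N ρ x hx }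
    obtain ⟨T, hT⟩ := IsNoetherian.noetherian N'
    refine ⟨T, le_antisymm ?_ ?_⟩
    · rw [Submodule.span_le]
      intro t ht
      have : t ∈ N' := hT ▸ Submodule.subset_span ht
      exact this
    · intro x hx
      have hx' : x ∈ Submodule.span (LaurentRing d) (T : Set M) := by
        rw [hT]; exact hx
      let Q : Submodule (LaurentRing d) M :=
        { carrier := (Submodule.span (RH v) (T : Set M) : Set M)
          add_mem' := fun ha hb => Submodule.add_mem _ ha hb
          zero_mem' := Submodule.zero_mem _
          smul_mem' := fun ρ y hy => hE _ ρ y hy }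
      have hQ : Submodule.span (LaurentRing d) (T : Set M) ≤ Q :=
        Submodule.span_le.mpr Submodule.subset_span
      exact hQ hx'
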